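/- arXiv:2205.01055 — 3 statements merged into one kernel-verified Lean document; each statement's English description precedes it below -/
import Mathlib

section
/- Let α > 0 and let b solve b'' = 2α b² with b(0) = b₀, b'(0) = g₀ < 0 and c := (1/2) g₀² - (2/3) α b₀³ ≠ 0. Let b* be the real number with (2/3) α b*³ = -c. Then b is strictly decreasing on an initial interval, reaches the value b* in finite time t₋ = ∫_{b*}^{b₀} db / √((4/3) α b³ + 2c), and b'(t₋) = 0. -/
/-!
Energy conservation gives `b'² = (4/3) α (b³ - b*³)`, so while `b` stays above `b*` the derivative
`b'` cannot vanish and stays negative. If `b` never reached `b*` before `T`, then `b` would be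
decreasing and bounded below and `b'` increasing (`b'' ≥ 0`) and bounded above; `(b, b')` would
then have a limit at `T`, and local existence would extend the solution beyond `T`, contradicting
maximality. At the first hitting time `τ` we get `b'(τ) = 0`, and on `[0, τ]` the substitution
`x = b(t)`, `dt = -dx / √((4/3) α x³ + 2c)`, gives `τ = t₋`. The integral converges because the
radicand `(4/3) α (x³ - b*³)` vanishes only to first order at `b* ≠ 0`.
-/

open Set Filter Topology MeasureTheory

theorem IsPreconnected.forall_lt_of_forall_ne {X : Type*} [TopologicalSpace X] {s : Set X}
    (hs : IsPreconnected s) {f : X → ℝ} (hf : ContinuousOn f s) {a : X} (ha : a ∈ s) {y : ℝ}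
    (hay : f a < y) (hne : ∀ x ∈ s, f x ≠ y) : ∀ x ∈ s, f x < y := by
  intro x hx
  by_contra! hxy
  obtain ⟨z, hz, hzy⟩ := hs.intermediate_value ha hx hf ⟨hay.le, hxy⟩
  exact hne z hz hzy

theorem ContinuousOn.exists_first_eq {X : Type*} [TopologicalSpace X] [T1Space X] {f : ℝ → X}
    {a b : ℝ}
    {y : X} (hf : ContinuousOn f (Icc a b)) (hab : a ≤ b) (hb : f b = y) :
    ∃ τ ∈ Icc a b, f τ = y ∧ ∀ t ∈ Ico a τ, f t ≠ y := by
  have hclosed := hf.preimage_isClosed_of_isClosed isClosed_Icc (isClosed_singleton (x := y))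
  obtain ⟨τ, ⟨hτ, hfτ⟩, hleast⟩ := (isCompact_Icc.of_isClosed_subset hclosed
    inter_subset_left).exists_isLeast ⟨b, right_mem_Icc.2 hab, hb⟩
  exact ⟨τ, hτ, hfτ, fun t ht hft => ht.2.not_ge (hleast ⟨⟨ht.1, ht.2.le.trans hτ.2⟩, hft⟩)⟩

theorem exists_extension_of_tendsto {E : Type*} [NormedAddCommGroup E] [NormedSpace ℝ E]
    [CompleteSpace E] {v : E → E} {W : ℝ → E} {a T : ℝ} {x : E} (hv : ContDiffAt ℝ 1 v x)
    (haT : a < T) (hW : ∀ t ∈ Ico a T, HasDerivAt W (v (W t)) t)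
    (hlim : Tendsto W (𝓝[<] T) (𝓝 x)) :
    ∃ T' > T, ∃ W' : ℝ → E, EqOn W' W (Iio T) ∧ ∀ t ∈ Ico a T', HasDerivAt W' (v (W' t)) t := by
  obtain ⟨f, hfT, ε, hε, hf⟩ :=
    hv.exists_forall_mem_closedBall_exists_eq_forall_mem_Ioo_hasDerivAt₀ T
  let W' : ℝ → E := fun t => if t < T then W t else f t
  have hW'W : EqOn W' W (Iio T) := fun t ht => if_pos ht
  have hW'f : EqOn W' f (Ici T) := fun t ht => if_neg (not_lt.2 ht)
  have hleft : ∀ t ∈ Ico a T, HasDerivAt W' (v (W' t)) t := fun t ht => by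
    rw [hW'W ht.2]
    exact (hW t ht).congr_of_eventuallyEq (eventuallyEq_of_mem (Iio_mem_nhds ht.2) hW'W)
  have hIoo : Ioo a T ∈ 𝓝[<] T := Ioo_mem_nhdsLT haT
  have hW'lim : Tendsto W' (𝓝[<] T) (𝓝 x) :=
    hlim.congr' (eventuallyEq_of_mem self_mem_nhdsWithin hW'W.symm)
  have hT : HasDerivAt W' (v x) T := by
    have hIic : HasDerivWithinAt W' (v x) (Iic T) T := by
      refine hasDerivWithinAt_Iic_of_tendsto_deriv (s := Ioo a T)
        (fun t ht => (hleft t (Ioo_subset_Ico_self ht)).differentiableAt.differentiableWithinAt)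
        ?_ hIoo ?_
      · rw [ContinuousWithinAt, hW'f self_mem_Ici, hfT]
        exact hW'lim.mono_left (nhdsWithin_mono _ Ioo_subset_Iio_self)
      · refine (hv.continuousAt.tendsto.comp hW'lim).congr' ?_
        filter_upwards [hIoo] with t ht
        exact (hleft t (Ioo_subset_Ico_self ht)).deriv.symm
    have hIci : HasDerivWithinAt W' (v x) (Ici T) T := by
      have := hf T ⟨by linarith, by linarith⟩
      rw [hfT] at this
      exact this.hasDerivWithinAt.congr hW'f (hW'f self_mem_Ici)
    simpa [Iic_union_Ici] using hIic.union hIci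
  refine ⟨T + ε, by linarith, W', hW'W, fun t ht => ?_⟩
  rcases lt_trichotomy t T with htT | rfl | htT
  · exact hleft t ⟨ht.1, htT⟩
  · rwa [hW'f self_mem_Ici, hfT]
  · rw [hW'f htT.le]
    exact (hf t ⟨by linarith, ht.2⟩).congr_of_eventuallyEq
      (eventuallyEq_of_mem (Ioi_mem_nhds htT) fun s hs => hW'f (Ioi_subset_Ici_self hs))

theorem integral_eq_of_comp_mul_deriv_eq_neg_one {φ b b' : ℝ → ℝ} {a τ : ℝ} (haτ : a ≤ τ)
    (hb : ContinuousOn b (Icc a τ)) (hderiv : ∀ t ∈ Ioo a τ, HasDerivAt b (b' t) t)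
    (hφ : ContinuousOn φ (b '' Ioo a τ)) (hφi : IntegrableOn φ (b '' Icc a τ))
    (hφb : ∀ t ∈ Ioo a τ, φ (b t) * b' t = -1) :
    ∫ x in b τ..b a, φ x = τ - a := by
  have hφb' : IntegrableOn (fun t => (φ ∘ b) t * b' t) (Icc a τ) :=
    (integrableOn_Icc_iff_integrableOn_Ioo).2
      ((integrableOn_const (C := -1) measure_Ioo_lt_top.ne).congr_fun
        (fun t ht => (hφb t ht).symm) measurableSet_Ioo)
  have key := intervalIntegral.integral_comp_mul_deriv''' (f := b) (f' := b') (g := φ)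
    (by rwa [uIcc_of_le haτ]) (by simpa [haτ] using fun t ht => (hderiv t ht).hasDerivWithinAt)
    (by simpa [haτ] using hφ) (by rwa [uIcc_of_le haτ]) (by rwa [uIcc_of_le haτ])
  rw [intervalIntegral.integral_congr_Ioo_of_le haτ (f := fun t => (φ ∘ b) t * b' t)
      (g := fun _ => -1) hφb,
    intervalIntegral.integral_const] at key
  rw [intervalIntegral.integral_symm, ← key]
  simp

theorem intervalIntegrable_inv_sqrt_cubic {α c β x₁ : ℝ} (hα : 0 < α) (hβ0 : β ≠ 0)
    (hβ : 4 / 3 * α * β ^ 3 + 2 * c = 0) (hβx : β ≤ x₁) :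
    IntervalIntegrable (fun x => (√(4 / 3 * α * x ^ 3 + 2 * c))⁻¹) volume β x₁ := by
  have hbound : IntervalIntegrable (fun x => (√(α * β ^ 2))⁻¹ * (x - β) ^ (-(1 : ℝ) / 2))
      volume β x₁ := by
    simpa using ((intervalIntegral.intervalIntegrable_rpow' (a := 0) (b := x₁ - β)
      (by norm_num : -(1 : ℝ) < -1 / 2)).comp_sub_right β).const_mul (√(α * β ^ 2))⁻¹
  refine hbound.mono_fun (by fun_prop) ?_
  rw [uIoc_of_le hβx]
  filter_upwards [ae_restrict_mem measurableSet_Ioc] with x hx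
  have hxβ : 0 < x - β := sub_pos.2 hx.1
  have hsplit : 4 / 3 * α * x ^ 3 + 2 * c
      = α * β ^ 2 * (x - β) + α / 3 * (x - β) * (2 * x + β) ^ 2 := by
    linear_combination hβ
  have hle : √(α * β ^ 2) * √(x - β) ≤ √(4 / 3 * α * x ^ 3 + 2 * c) := by
    rw [← Real.sqrt_mul (by positivity), hsplit]
    exact Real.sqrt_le_sqrt (le_add_of_nonneg_right (by positivity))
  have hpos : 0 < √(α * β ^ 2) * √(x - β) := by positivity
  rw [Real.norm_of_nonneg (by positivity), Real.norm_of_nonneg (by positivity),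
    show -(1 : ℝ) / 2 = -(1 / 2) by norm_num, Real.rpow_neg hxβ.le, ← Real.sqrt_eq_rpow,
    ← mul_inv]
  exact inv_anti₀ hpos hle

def SolvesOn (α T : ℝ) (b b' : ℝ → ℝ) : Prop :=
  ∀ t ∈ Ico (0 : ℝ) T, HasDerivAt b (b' t) t ∧ HasDerivAt b' (2 * α * b t ^ 2) t

namespace SolvesOn

variable {α T : ℝ} {b b' : ℝ → ℝ}

theorem mono (h : SolvesOn α T b b') {T' : ℝ} (hT' : T' ≤ T) : SolvesOn α T' b b' :=
  fun t ht => h t ⟨ht.1, ht.2.trans_le hT'⟩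

theorem continuousOn (h : SolvesOn α T b b') : ContinuousOn b (Ico 0 T) :=
  fun t ht => (h t ht).1.continuousAt.continuousWithinAt

theorem continuousOn_deriv (h : SolvesOn α T b b') : ContinuousOn b' (Ico 0 T) :=
  fun t ht => (h t ht).2.continuousAt.continuousWithinAt

theorem sq_deriv_eq (h : SolvesOn α T b b') {c : ℝ}
    (hc : c = 1 / 2 * b' 0 ^ 2 - 2 / 3 * α * b 0 ^ 3) {t : ℝ} (ht : t ∈ Ico 0 T) :
    b' t ^ 2 = 4 / 3 * α * b t ^ 3 + 2 * c := by
  let E : ℝ → ℝ := fun s => b' s ^ 2 - 4 / 3 * α * b s ^ 3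
  have hE : ∀ s ∈ Ico 0 T, HasDerivAt E 0 s := by
    intro s hs
    refine (((h s hs).2.fun_pow 2).fun_sub
      (((h s hs).1.fun_pow 3).const_mul (4 / 3 * α))).congr_deriv ?_
    push_cast
    ring
  have hEt : E t = E 0 := by
    refine constant_of_has_deriv_right_zero (fun s hs => ?_) (fun s hs => ?_) t ⟨ht.1, le_rfl⟩
    · exact (hE s ⟨hs.1, hs.2.trans_lt ht.2⟩).continuousAt.continuousWithinAt
    · exact (hE s ⟨hs.1, hs.2.trans ht.2⟩).hasDerivWithinAt
  linear_combination hEt - 2 * hc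

theorem exists_extension_of_bddBelow_of_deriv_nonpos (h : SolvesOn α T b b') (hα : 0 ≤ α)
    (hT : 0 < T) {β : ℝ} (hbdd : ∀ t ∈ Ico 0 T, β ≤ b t) (hneg : ∀ t ∈ Ico 0 T, b' t ≤ 0) :
    ∃ T' > T, ∃ B B' : ℝ → ℝ, SolvesOn α T' B B' ∧ B 0 = b 0 ∧ B' 0 = b' 0 := by
  have hsub : Ioo 0 T ⊆ Ico 0 T := Ioo_subset_Ico_self
  have hanti : AntitoneOn b (Ioo 0 T) := by
    refine antitoneOn_of_deriv_nonpos (convex_Ioo 0 T) (h.continuousOn.mono hsub)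
      (fun t ht => ?_) (fun t ht => ?_) <;> rw [interior_Ioo] at ht
    · exact (h t (hsub ht)).1.differentiableAt.differentiableWithinAt
    · rw [(h t (hsub ht)).1.deriv]; exact hneg t (hsub ht)
  have hmono : MonotoneOn b' (Ioo 0 T) := by
    refine monotoneOn_of_deriv_nonneg (convex_Ioo 0 T) (h.continuousOn_deriv.mono hsub)
      (fun t ht => ?_) (fun t ht => ?_) <;> rw [interior_Ioo] at ht
    · exact (h t (hsub ht)).2.differentiableAt.differentiableWithinAt
    · rw [(h t (hsub ht)).2.deriv]; positivity
  have hne : (Ioo 0 T).Nonempty := nonempty_Ioo.2 hT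
  have hlim_b := hanti.tendsto_nhdsWithin_Ioo_left hne
    ⟨β, forall_mem_image.2 fun t ht => hbdd t (hsub ht)⟩
  have hlim_b' := hmono.tendsto_nhdsWithin_Ioo_left hne
    ⟨0, forall_mem_image.2 fun t ht => hneg t (hsub ht)⟩
  let v : ℝ × ℝ → ℝ × ℝ := fun p => (p.2, 2 * α * p.1 ^ 2)
  have hv : ContDiff ℝ 1 v := contDiff_snd.prodMk (contDiff_const.mul (contDiff_fst.pow 2))
  obtain ⟨T', hT', W, hWb, hW⟩ := exists_extension_of_tendsto (v := v)
    (W := fun t => (b t, b' t)) hv.contDiffAt hT (fun t ht => (h t ht).1.prodMk (h t ht).2)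
    (hlim_b.prodMk_nhds hlim_b')
  refine ⟨T', hT', fun t => (W t).1, fun t => (W t).2, fun t ht => ?_, ?_, ?_⟩
  · exact ⟨(ContinuousLinearMap.fst ℝ ℝ ℝ).hasFDerivAt.comp_hasDerivAt t (hW t ht),
      (ContinuousLinearMap.snd ℝ ℝ ℝ).hasFDerivAt.comp_hasDerivAt t (hW t ht)⟩
  · simp [hWb hT]
  · simp [hWb hT]

theorem lt_and_deriv_neg_of_forall_ne (h : SolvesOn α T b b') (hα : 0 < α) {c β : ℝ}
    (hc : c = 1 / 2 * b' 0 ^ 2 - 2 / 3 * α * b 0 ^ 3) (hβ : 4 / 3 * α * β ^ 3 + 2 * c = 0)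
    (hb0 : β < b 0) (hb'0 : b' 0 < 0) (hne : ∀ t ∈ Ico 0 T, b t ≠ β) :
    ∀ t ∈ Ico 0 T, β < b t ∧ b' t < 0 := by
  intro t ht
  have h0 : (0 : ℝ) ∈ Ico 0 T := ⟨le_rfl, ht.1.trans_lt ht.2⟩
  have habove : ∀ s ∈ Ico 0 T, β < b s := by
    simpa using IsPreconnected.forall_lt_of_forall_ne isPreconnected_Ico h.continuousOn.neg h0
      (neg_lt_neg hb0) (fun s hs => by simpa using hne s hs)
  refine ⟨habove t ht, IsPreconnected.forall_lt_of_forall_ne isPreconnected_Ico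
    h.continuousOn_deriv h0 hb'0 (fun s hs hs0 => ?_) t ht⟩
  have hcube : β ^ 3 < b s ^ 3 := (Odd.pow_lt_pow (n := 3) (by decide)).2 (habove s hs)
  have := h.sq_deriv_eq hc hs
  rw [hs0] at this
  nlinarith

theorem exists_eq_of_forall_not_extends (h : SolvesOn α T b b') (hα : 0 < α) (hT : 0 < T)
    {c β : ℝ} (hc : c = 1 / 2 * b' 0 ^ 2 - 2 / 3 * α * b 0 ^ 3)
    (hβ : 4 / 3 * α * β ^ 3 + 2 * c = 0) (hb0 : β < b 0) (hb'0 : b' 0 < 0)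
    (hmax : ∀ T' > T, ¬ ∃ B B' : ℝ → ℝ, SolvesOn α T' B B' ∧ B 0 = b 0 ∧ B' 0 = b' 0) :
    ∃ t ∈ Ico 0 T, b t = β := by
  by_contra! hne
  have hdec := h.lt_and_deriv_neg_of_forall_ne hα hc hβ hb0 hb'0 hne
  obtain ⟨T', hT', hext⟩ := h.exists_extension_of_bddBelow_of_deriv_nonpos hα.le hT
    (fun t ht => (hdec t ht).1.le) (fun t ht => (hdec t ht).2.le)
  exact hmax T' hT' hext

theorem strictAntiOn_Icc (h : SolvesOn α T b b') {τ : ℝ} (hτT : τ < T)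
    (hneg : ∀ t ∈ Ioo 0 τ, b' t < 0) : StrictAntiOn b (Icc 0 τ) := by
  refine strictAntiOn_of_deriv_neg (convex_Icc 0 τ) (h.continuousOn.mono
    (Icc_subset_Ico_right hτT)) fun t ht => ?_
  rw [interior_Icc] at ht
  rw [(h t ⟨ht.1.le, ht.2.trans hτT⟩).1.deriv]
  exact hneg t ht

theorem integral_inv_sqrt_eq (h : SolvesOn α T b b') (hα : 0 < α) {c β τ : ℝ}
    (hc : c = 1 / 2 * b' 0 ^ 2 - 2 / 3 * α * b 0 ^ 3) (hβ0 : β ≠ 0)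
    (hβ : 4 / 3 * α * β ^ 3 + 2 * c = 0) (hτ : 0 ≤ τ) (hτT : τ < T) (hbτ : b τ = β)
    (hdec : ∀ t ∈ Ico 0 τ, β < b t ∧ b' t < 0) :
    ∫ x in β..b 0, (√(4 / 3 * α * x ^ 3 + 2 * c))⁻¹ = τ := by
  have hanti := h.strictAntiOn_Icc hτT fun t ht => (hdec t (Ioo_subset_Ico_self ht)).2
  have hrange : b '' Icc 0 τ ⊆ Icc β (b 0) := by
    rintro _ ⟨t, ht, rfl⟩
    refine ⟨?_, hanti.antitoneOn ⟨le_rfl, hτ⟩ ht ht.1⟩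
    rcases ht.2.lt_or_eq with htτ | rfl
    · exact (hdec t ⟨ht.1, htτ⟩).1.le
    · exact hbτ.ge
  have hβb : β ≤ b 0 := (hrange (mem_image_of_mem b ⟨le_rfl, hτ⟩)).1
  have hpos : ∀ x, β < x → 0 < 4 / 3 * α * x ^ 3 + 2 * c := fun x hx => by
    have := (Odd.pow_lt_pow (n := 3) (by decide)).2 hx
    nlinarith
  rw [← hbτ, integral_eq_of_comp_mul_deriv_eq_neg_one hτ
    (h.continuousOn.mono (Icc_subset_Ico_right hτT))
    (fun t ht => (h t ⟨ht.1.le, ht.2.trans hτT⟩).1) ?_ ?_ ?_, sub_zero]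
  · rintro _ ⟨t, ht, rfl⟩
    have hsqrt := Real.sqrt_pos.2 (hpos _ (hdec t (Ioo_subset_Ico_self ht)).1)
    exact ((by fun_prop : Continuous fun x : ℝ => √(4 / 3 * α * x ^ 3 + 2 * c)).continuousAt.inv₀
      hsqrt.ne').continuousWithinAt
  · exact ((intervalIntegrable_iff_integrableOn_Icc_of_le hβb).1
      (intervalIntegrable_inv_sqrt_cubic hα hβ0 hβ hβb)).mono_set hrange
  · intro t ht
    have hneg := (hdec t (Ioo_subset_Ico_self ht)).2
    rw [← h.sq_deriv_eq hc ⟨ht.1.le, ht.2.trans hτT⟩, Real.sqrt_sq_eq_abs, abs_of_neg hneg]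
    field_simp [hneg.ne]

end SolvesOn

theorem stmt_6 (α b₀ g₀ T : ℝ) (hα : 0 < α) (hg₀ : g₀ < 0) (hT : 0 < T)
    (c : ℝ) (hc : c = (1 / 2) * g₀ ^ 2 - (2 / 3) * α * b₀ ^ 3) (hc0 : c ≠ 0)
    (bstar : ℝ) (hbstar : (2 / 3) * α * bstar ^ 3 = -c)
    (b b' : ℝ → ℝ)
    (hb : ∀ t ∈ Set.Ico (0 : ℝ) T, HasDerivAt b (b' t) t)
    (hb' : ∀ t ∈ Set.Ico (0 : ℝ) T, HasDerivAt b' (2 * α * (b t) ^ 2) t)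
    (hb0 : b 0 = b₀) (hb'0 : b' 0 = g₀)
    -- T is the maximal existence time
    (hmax : ∀ T' : ℝ, T < T' →
      ¬ ∃ B B' : ℝ → ℝ, (∀ t ∈ Set.Ico (0 : ℝ) T', HasDerivAt B (B' t) t ∧
          HasDerivAt B' (2 * α * (B t) ^ 2) t) ∧ B 0 = b₀ ∧ B' 0 = g₀) :
    (∃ ε > 0, StrictAntiOn b (Set.Icc 0 ε)) ∧
    (∫ x in bstar..b₀, (Real.sqrt ((4 / 3) * α * x ^ 3 + 2 * c))⁻¹) ∈
      Set.Ico (0 : ℝ) T ∧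
    b (∫ x in bstar..b₀, (Real.sqrt ((4 / 3) * α * x ^ 3 + 2 * c))⁻¹) = bstar ∧
    b' (∫ x in bstar..b₀, (Real.sqrt ((4 / 3) * α * x ^ 3 + 2 * c))⁻¹) = 0 := by
  subst hb0 hb'0
  have hsol : SolvesOn α T b b' := fun t ht => ⟨hb t ht, hb' t ht⟩
  have hβ : 4 / 3 * α * bstar ^ 3 + 2 * c = 0 := by linarith
  have hβ0 : bstar ≠ 0 := by
    rintro rfl
    exact hc0 (by linarith)
  have hβb : bstar < b 0 :=
    (Odd.pow_lt_pow (n := 3) (by decide)).1 (by nlinarith [pow_pos (neg_pos.2 hg₀) 2])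
  obtain ⟨t₁, ht₁, hbt₁⟩ := hsol.exists_eq_of_forall_not_extends hα hT hc hβ hβb hg₀ hmax
  obtain ⟨τ, hτ, hbτ, hfirst⟩ :=
    (hsol.continuousOn.mono (Icc_subset_Ico_right ht₁.2)).exists_first_eq ht₁.1 hbt₁
  have hτT : τ < T := hτ.2.trans_lt ht₁.2
  have hτ0 : 0 < τ := hτ.1.lt_of_ne (by rintro rfl; exact hβb.ne' hbτ)
  have hdec := (hsol.mono hτT.le).lt_and_deriv_neg_of_forall_ne hα hc hβ hβb hg₀ hfirst
  have hb'τ : b' τ = 0 := by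
    have := hsol.sq_deriv_eq hc ⟨hτ.1, hτT⟩
    rwa [hbτ, hβ, sq_eq_zero_iff] at this
  rw [hsol.integral_inv_sqrt_eq hα hc hβ0 hβ hτ.1 hτT hbτ hdec]
  exact ⟨⟨τ, hτ0, hsol.strictAntiOn_Icc hτT fun t ht => (hdec t (Ioo_subset_Ico_self ht)).2⟩,
    ⟨hτ.1, hτT⟩, hbτ, hb'τ⟩
end

section
/- Let H : [T₁, T) → ℝ be C² with H(T₁) = H'(T₁) = 0, and suppose H''(t) ≥ ε > 0 and H''(t) ≥ K H(t)²/(t+1)² for all t ∈ [T₁, T), with K, ε > 0. Then T < ∞; that is, H blows up in finite time. -/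
/-!
From `H'' ≥ ε` and `H(T₁) = H'(T₁) = 0` we get `H' ≥ 0` and `H > 0` after `T₁`. Since the weight
`(s + 1)²` dominates `(t + 1)²` for `t ≤ s`, integrating `2 H' H'' (s + 1)² ≥ 2 K H² H'` over
`[T₁, s]` gives `(H'(s) (s + 1))² ≥ (2K/3) H(s)³`. In the variable `log (t + 1)` this reads
`dH/d log(t + 1) ≥ c H^{3/2}` with `c = √(2K/3)`, so `H^{-1/2} + (c/2) log (t + 1)` is
nonincreasing; as `H^{-1/2} ≥ 0` and `log (t + 1) → ∞`, that is impossible.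
-/

open Set Filter Real

lemma monotoneOn_of_hasDerivAt_nonneg {s : Set ℝ} (hs : Convex ℝ s) {f f' : ℝ → ℝ}
    (hf : ∀ x ∈ s, HasDerivAt f (f' x) x) (hf' : ∀ x ∈ interior s, 0 ≤ f' x) :
    MonotoneOn f s :=
  monotoneOn_of_hasDerivWithinAt_nonneg hs
    (fun x hx => (hf x hx).continuousAt.continuousWithinAt)
    (fun x hx => (hf x (interior_subset hx)).hasDerivWithinAt) hf'

lemma antitoneOn_of_hasDerivAt_nonpos {s : Set ℝ} (hs : Convex ℝ s) {f f' : ℝ → ℝ}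
    (hf : ∀ x ∈ s, HasDerivAt f (f' x) x) (hf' : ∀ x ∈ interior s, f' x ≤ 0) :
    AntitoneOn f s :=
  antitoneOn_of_hasDerivWithinAt_nonpos hs
    (fun x hx => (hf x hx).continuousAt.continuousWithinAt)
    (fun x hx => (hf x (interior_subset hx)).hasDerivWithinAt) hf'

lemma le_on_Ici_of_hasDerivAt_le {f g f' g' : ℝ → ℝ} {a : ℝ}
    (hf : ∀ x ∈ Ici a, HasDerivAt f (f' x) x) (hg : ∀ x ∈ Ici a, HasDerivAt g (g' x) x)
    (ha : f a ≤ g a) (hfg : ∀ x ∈ Ioi a, f' x ≤ g' x) {x : ℝ} (hx : x ∈ Ici a) :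
    f x ≤ g x := by
  have hmono : MonotoneOn (fun x => g x - f x) (Ici a) :=
    monotoneOn_of_hasDerivAt_nonneg (convex_Ici a) (fun x hx => (hg x hx).sub (hf x hx))
      (fun x hx => sub_nonneg.2 (hfg x (by rwa [interior_Ici] at hx)))
  linarith [hmono self_mem_Ici hx hx]

lemma cube_le_sq_deriv_mul_of_second_deriv_ge {H H' H'' : ℝ → ℝ} {a K : ℝ} (ha : -1 < a)
    (hK : 0 ≤ K) (hH : ∀ t ∈ Ici a, HasDerivAt H (H' t) t)
    (hH' : ∀ t ∈ Ici a, HasDerivAt H' (H'' t) t) (h0 : H a = 0) (h0' : H' a = 0)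
    (hH'_nonneg : ∀ t ∈ Ici a, 0 ≤ H' t)
    (hineq : ∀ t ∈ Ici a, K * H t ^ 2 / (t + 1) ^ 2 ≤ H'' t) {s : ℝ} (hs : a ≤ s) :
    2 * K / 3 * H s ^ 3 ≤ (H' s * (s + 1)) ^ 2 := by
  have hmono : MonotoneOn (fun t => (H' t * (s + 1)) ^ 2 - 2 * K / 3 * H t ^ 3) (Icc a s) := by
    refine monotoneOn_of_hasDerivAt_nonneg (convex_Icc a s)
      (f' := fun t => 2 * H' t * ((s + 1) ^ 2 * H'' t - K * H t ^ 2)) (fun t ht => ?_)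
      (fun t ht => ?_)
    · refine ((((hH' t ht.1).mul_const (s + 1)).fun_pow 2).fun_sub
        (((hH t ht.1).fun_pow 3).const_mul (2 * K / 3))).congr_deriv ?_
      push_cast
      ring
    · rw [interior_Icc] at ht
      have ht1 : 0 < t + 1 := by linarith [ht.1]
      have hweight : (t + 1) ^ 2 ≤ (s + 1) ^ 2 := pow_le_pow_left₀ ht1.le (by linarith [ht.2]) 2
      have hK' : K * H t ^ 2 ≤ (t + 1) ^ 2 * H'' t := by
        rw [← div_le_iff₀' (by positivity)]
        exact hineq t ht.1.le
      have hH''_nonneg : 0 ≤ H'' t :=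
        nonneg_of_mul_nonneg_right ((mul_nonneg hK (sq_nonneg _)).trans hK') (by positivity)
      exact mul_nonneg (mul_nonneg zero_le_two (hH'_nonneg t ht.1.le)) (by nlinarith)
  simpa [h0, h0'] using hmono (left_mem_Icc.2 hs) (right_mem_Icc.2 hs) hs

lemma antitoneOn_inv_sqrt_add_log {H H' : ℝ → ℝ} {a c : ℝ} (ha : -1 < a) (hc : 0 ≤ c)
    (hH : ∀ t ∈ Ici a, HasDerivAt H (H' t) t) (hpos : ∀ t ∈ Ici a, 0 < H t)
    (hH'_nonneg : ∀ t ∈ Ici a, 0 ≤ H' t)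
    (hgrowth : ∀ t ∈ Ici a, c ^ 2 * H t ^ 3 ≤ (H' t * (t + 1)) ^ 2) :
    AntitoneOn (fun t => (√(H t))⁻¹ + c / 2 * log (t + 1)) (Ici a) := by
  refine antitoneOn_of_hasDerivAt_nonpos (convex_Ici a)
    (f' := fun t => -(H' t / (2 * √(H t))) / √(H t) ^ 2 + c / 2 * (1 / (t + 1)))
    (fun t ht => ?_) (fun t ht => ?_)
  · have ht1 : t + 1 ≠ 0 := by linarith [ht.out]
    exact (((hH t ht).sqrt (hpos t ht).ne').inv (sqrt_pos.2 (hpos t ht)).ne').add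
      ((((hasDerivAt_id t).add_const 1).log ht1).const_mul (c / 2))
  · rw [interior_Ici, mem_Ioi] at ht
    have ht1 : 0 < t + 1 := by linarith
    set r := √(H t)
    have hr0 : 0 < r := sqrt_pos.2 (hpos t ht.le)
    have hr2 : r ^ 2 = H t := sq_sqrt (hpos t ht.le).le
    have hkey : c * r ^ 3 ≤ H' t * (t + 1) := by
      rw [← pow_le_pow_iff_left₀ (by positivity) (mul_nonneg (hH'_nonneg t ht.le) ht1.le)
        two_ne_zero]
      calc (c * r ^ 3) ^ 2 = c ^ 2 * (r ^ 2) ^ 3 := by ring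
        _ ≤ _ := hr2 ▸ hgrowth t ht.le
    field_simp
    linarith

lemma not_antitoneOn_inv_sqrt_add_log (H : ℝ → ℝ) (a : ℝ) {c : ℝ} (hc : 0 < c) :
    ¬ AntitoneOn (fun t => (√(H t))⁻¹ + c / 2 * log (t + 1)) (Ici a) := by
  intro hanti
  have hlog : Tendsto (fun t => c / 2 * log (t + 1)) atTop atTop :=
    (tendsto_log_atTop.comp (tendsto_atTop_add_const_right _ 1 tendsto_id)).const_mul_atTop
      (by positivity)
  obtain ⟨t, hbig, hat⟩ := ((hlog.eventually_gt_atTop ((√(H a))⁻¹ + c / 2 * log (a + 1))).and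
    (eventually_ge_atTop a)).exists
  have hle := hanti self_mem_Ici hat hat
  have hnonneg : 0 ≤ (√(H t))⁻¹ := inv_nonneg.2 (sqrt_nonneg _)
  simp only at hle
  linarith

/-- No global-in-time C² function can satisfy both differential inequalities:
`H'' ≥ ε > 0` and `H'' ≥ K H²/(t+1)²` with `H(T₁) = H'(T₁) = 0`. -/
theorem stmt_16 (T₁ ε K : ℝ) (hT₁ : 0 ≤ T₁) (hε : 0 < ε) (hK : 0 < K)
    (H H' H'' : ℝ → ℝ)
    (hH : ∀ t ∈ Set.Ici T₁, HasDerivAt H (H' t) t)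
    (hH' : ∀ t ∈ Set.Ici T₁, HasDerivAt H' (H'' t) t)
    (h0 : H T₁ = 0) (h0' : H' T₁ = 0)
    (hineq1 : ∀ t ∈ Set.Ici T₁, ε ≤ H'' t)
    (hineq2 : ∀ t ∈ Set.Ici T₁, K * (H t) ^ 2 / (t + 1) ^ 2 ≤ H'' t) :
    False := by
  have hH'_lb : ∀ t ∈ Ici T₁, ε * (t - T₁) ≤ H' t := fun t ht =>
    le_on_Ici_of_hasDerivAt_le (f' := fun _ => ε)
      (fun x _ => ((hasDerivAt_id' x).sub_const T₁).const_mul ε |>.congr_deriv (mul_one ε)) hH'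
      (by simp [h0']) (fun x hx => hineq1 x (Ioi_subset_Ici_self hx)) ht
  have hH_lb : ∀ t ∈ Ici T₁, ε / 2 * (t - T₁) ^ 2 ≤ H t := fun t ht =>
    le_on_Ici_of_hasDerivAt_le (f' := fun x => ε * (x - T₁))
      (fun x _ => (((hasDerivAt_id' x).sub_const T₁).fun_pow 2).const_mul (ε / 2)
        |>.congr_deriv (by push_cast; ring)) hH
      (by simp [h0]) (fun x hx => hH'_lb x (Ioi_subset_Ici_self hx)) ht
  have hH'_nonneg : ∀ t ∈ Ici T₁, 0 ≤ H' t := fun t ht =>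
    (mul_nonneg hε.le (sub_nonneg.2 ht)).trans (hH'_lb t ht)
  have hIci : Ici (T₁ + 1) ⊆ Ici T₁ := Ici_subset_Ici.2 (by linarith)
  have hpos : ∀ t ∈ Ici (T₁ + 1), 0 < H t := fun t ht => by
    have h1 : 1 ≤ (t - T₁) ^ 2 := one_le_pow₀ (by rw [mem_Ici] at ht; linarith)
    nlinarith [hH_lb t (hIci ht)]
  have henergy : ∀ t ∈ Ici T₁, 2 * K / 3 * H t ^ 3 ≤ (H' t * (t + 1)) ^ 2 := fun t ht =>
    cube_le_sq_deriv_mul_of_second_deriv_ge (by linarith) hK.le hH hH' h0 h0' hH'_nonneg hineq2 ht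
  refine not_antitoneOn_inv_sqrt_add_log H (T₁ + 1) (sqrt_pos.2 (by positivity : 0 < 2 * K / 3))
    (antitoneOn_inv_sqrt_add_log (by linarith) (sqrt_nonneg _) (fun t ht => hH t (hIci ht)) hpos
      (fun t ht => hH'_nonneg t (hIci ht)) (fun t ht => ?_))
  rw [sq_sqrt (by positivity)]
  exact henergy t (hIci ht)
end

section
/- Let f, g : ℝ → ℝ be continuous with support in [-X, X], and let u₀(x,t) = (1/2)(f(x-t) + f(x+t)) + (1/2)∫_{x-t}^{x+t} g(ξ) dξ be the free wave evolution. Define M(x) = (1/2) f(x) + (1/2)∫_x^X g(ξ) dξ. Then for any t ≥ (X - X₀)/2 with 0 < X₀ < X, ∫_{t+X₀}^{t+X} u₀(x,t) dx = ∫_{X₀}^{X} M(x) dx. -/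
/-!
For `x ≥ t + X₀` and `t ≥ (X - X₀)/2` the point `x + t` lies at or beyond `X`, where `f` and `g`
vanish (at `X` itself by continuity). Hence `u₀ x t = M (x - t)` on the whole interval of
integration, and the translation `x ↦ x - t` carries `[t + X₀, t + X]` onto `[X₀, X]`.
-/

open Set

lemma Continuous.eq_zero_of_le_of_eq_zero_of_lt {h : ℝ → ℝ} (hc : Continuous h) {a : ℝ}
    (hz : ∀ x, a < x → h x = 0) {x : ℝ} (hx : a ≤ x) : h x = 0 := by
  have hsub : Ioi a ⊆ {y | h y = 0} := fun y hy => hz y hy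
  rw [← (isClosed_eq hc continuous_const).closure_subset_iff, closure_Ioi] at hsub
  exact hsub hx

lemma eq_zero_of_lt_of_notMem_Icc {h : ℝ → ℝ} {X : ℝ} (hz : ∀ x, x ∉ Icc (-X) X → h x = 0)
    {x : ℝ} (hx : X < x) : h x = 0 :=
  hz x fun hmem => hx.not_ge hmem.2

lemma intervalIntegral.integral_eq_integral_of_eq_zero_of_le {g : ℝ → ℝ} {a b c : ℝ}
    (hg : IntervalIntegrable g MeasureTheory.volume a b)
    (hgc : IntervalIntegrable g MeasureTheory.volume b c) (hbc : b ≤ c)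
    (hz : ∀ x, b ≤ x → g x = 0) :
    (∫ ξ in a..c, g ξ) = ∫ ξ in a..b, g ξ := by
  have hzero : (∫ ξ in b..c, g ξ) = 0 := by
    rw [intervalIntegral.integral_congr (g := fun _ => (0 : ℝ)) fun ξ hξ =>
      hz ξ (uIcc_of_le hbc ▸ hξ).1]
    exact intervalIntegral.integral_zero
  rw [← intervalIntegral.integral_add_adjacent_intervals hg hgc, hzero, add_zero]

theorem stmt_17_general (X X₀ t : ℝ) (hX : X₀ < X)
    (ht : (X - X₀) / 2 ≤ t)
    (f g : ℝ → ℝ) (hf : Continuous f) (hg : Continuous g)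
    (hfs : ∀ x, x ∉ Set.Icc (-X) X → f x = 0)
    (hgs : ∀ x, x ∉ Set.Icc (-X) X → g x = 0)
    (u₀ : ℝ → ℝ → ℝ)
    (hu₀ : ∀ x s, u₀ x s
      = (1 / 2) * (f (x - s) + f (x + s)) + (1 / 2) * ∫ ξ in (x - s)..(x + s), g ξ)
    (M : ℝ → ℝ)
    (hM : ∀ x, M x = (1 / 2) * f x + (1 / 2) * ∫ ξ in x..X, g ξ) :
    (∫ x in (t + X₀)..(t + X), u₀ x t) = ∫ x in X₀..X, M x := by
  have hf0 : ∀ x, X ≤ x → f x = 0 := fun _ =>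
    hf.eq_zero_of_le_of_eq_zero_of_lt fun _ => eq_zero_of_lt_of_notMem_Icc hfs
  have hg0 : ∀ ξ, X ≤ ξ → g ξ = 0 := fun _ =>
    hg.eq_zero_of_le_of_eq_zero_of_lt fun _ => eq_zero_of_lt_of_notMem_Icc hgs
  have hu₀M : EqOn (u₀ · t) (fun x => M (x - t)) (uIcc (t + X₀) (t + X)) := by
    intro x hx
    have hxt : X ≤ x + t := by
      linarith [(uIcc_of_le (by linarith : t + X₀ ≤ t + X) ▸ hx).1]
    simp only [hu₀, hM, hf0 _ hxt,
      intervalIntegral.integral_eq_integral_of_eq_zero_of_le (hg.intervalIntegrable _ _)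
        (hg.intervalIntegrable _ _) hxt hg0]
    ring
  rw [intervalIntegral.integral_congr hu₀M, intervalIntegral.integral_comp_sub_right M t]
  congr 1 <;> ring

theorem stmt_17 (X X₀ t : ℝ) (hX₀ : 0 < X₀) (hX : X₀ < X)
    (ht : (X - X₀) / 2 ≤ t)
    (f g : ℝ → ℝ) (hf : Continuous f) (hg : Continuous g)
    (hfs : ∀ x, x ∉ Set.Icc (-X) X → f x = 0)
    (hgs : ∀ x, x ∉ Set.Icc (-X) X → g x = 0)
    (u₀ : ℝ → ℝ → ℝ)
    (hu₀ : ∀ x s, u₀ x s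
      = (1 / 2) * (f (x - s) + f (x + s)) + (1 / 2) * ∫ ξ in (x - s)..(x + s), g ξ)
    (M : ℝ → ℝ)
    (hM : ∀ x, M x = (1 / 2) * f x + (1 / 2) * ∫ ξ in x..X, g ξ) :
    (∫ x in (t + X₀)..(t + X), u₀ x t) = ∫ x in X₀..X, M x :=
  stmt_17_general X X₀ t hX ht f g hf hg hfs hgs u₀ hu₀ M hM
end
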